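/- (One-step error accumulation with noise.) Fix Δt ∈ ℝ and let F : ℝ⁹ → ℝ⁹ be the linear map (ω, v, x) ↦ (ω, v, x + Δt·v). Let T̄_k ∈ SE₂(3), ξ_k, η_k ∈ ℝ⁹, Υ_k ∈ SE₂(3), Γ_k an invertible 5×5 real matrix, and Φ = Φ_Δt. Define T_k := T̄_k exp_m(ξ_k^∧), the noisy propagation T_{k+1} := Γ_k Φ(T_k) Υ_k exp_m(η_k^∧), and the noise-free propagation T̄_{k+1} := Γ_k Φ(T̄_k) Υ_k. Then T̄_{k+1}⁻¹ T_{k+1} = exp_m((F_k ξ_k)^∧) exp_m(η_k^∧), where F_k := Ad_{Υ_k⁻¹} F. -/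

import Mathlib

open Matrix

noncomputable section

abbrev M3 := Matrix (Fin 3) (Fin 3) ℝ
abbrev M5 := Matrix (Fin 5) (Fin 5) ℝ
abbrev V3 := Fin 3 → ℝ
abbrev V9 := V3 × V3 × V3

/-- Skew-symmetric cross-product matrix `(ω)ₓ`. -/
def skew (ω : V3) : M3 := !![0, -ω 2, ω 1; ω 2, 0, -ω 0; -ω 1, ω 0, 0]

/-- 5×5 block matrix `[[A, v, x],[0₁ₓ₃, d, 0],[0₁ₓ₃, 0, e]]`. -/
def blk (A : M3) (v x : V3) (d e : ℝ) : M5 :=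
  !![A 0 0, A 0 1, A 0 2, v 0, x 0;
     A 1 0, A 1 1, A 1 2, v 1, x 1;
     A 2 0, A 2 1, A 2 2, v 2, x 2;
     0, 0, 0, d, 0;
     0, 0, 0, 0, e]

/-- Element of `SE₂(3)` built from rotation `R`, velocity `V`, position `X`. -/
def se23 (R : M3) (V X : V3) : M5 := blk R V X 1 1

/-- The hat map `ξ^∧` of `ξ = (ω, v, x) ∈ ℝ⁹`. -/
def hat (ω v x : V3) : M5 := blk (skew ω) v x 0 0

def hat9 (ξ : V9) : M5 := hat ξ.1 ξ.2.1 ξ.2.2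

def IsSO3 (R : M3) : Prop := Rᵀ * R = 1 ∧ R.det = 1

def IsSE23 (T : M5) : Prop := ∃ R V X, IsSO3 R ∧ T = se23 R V X

/-- Rotation block of a 5×5 matrix. -/
def Rof (T : M5) : M3 := Matrix.of fun i j => T (Fin.castLE (by omega) i) (Fin.castLE (by omega) j)

/-- Velocity column of a 5×5 matrix. -/
def Vof (T : M5) : V3 := fun i => T (Fin.castLE (by omega) i) 3

/-- Position column of a 5×5 matrix. -/
def Xof (T : M5) : V3 := fun i => T (Fin.castLE (by omega) i) 4

/-- Adjoint of `T ∈ SE₂(3)` acting on `ξ = (ω, v, x) ∈ ℝ⁹`: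
  `[[R, 0, 0],[(V)ₓR, R, 0],[(X)ₓR, 0, R]]`. -/
def Ad (T : M5) (ξ : V9) : V9 :=
  (Rof T *ᵥ ξ.1,
   (skew (Vof T) * Rof T) *ᵥ ξ.1 + Rof T *ᵥ ξ.2.1,
   (skew (Xof T) * Rof T) *ᵥ ξ.1 + Rof T *ᵥ ξ.2.2)

/-- `f(T)` : places the velocity column of `T` in the position column. -/
def fmap (T : M5) : M5 := blk 0 0 (Vof T) 0 0

/-- `Φ_t` : maps `[[R,V,X],...]` to `[[R,V,X+tV],...]` (acting on the top three rows). -/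
def Phi (t : ℝ) (T : M5) : M5 :=
  Matrix.of fun i j => if (i : ℕ) < 3 ∧ (j : ℕ) = 4 then T i j + t * T i 3 else T i j

/-- The linear map `F : (ω,v,x) ↦ (ω, v, x + Δt·v)`. -/
def Fmap (Δt : ℝ) (ξ : V9) : V9 := (ξ.1, ξ.2.1, ξ.2.2 + Δt • ξ.2.1)

/-! On matrices whose last two rows are those of the identity (every element of `SE₂(3)`, and
every `T̄ exp(ξ^∧)`), `Φ_Δt` is the conjugation `T ↦ S⁻¹ T S` by the shear `S`, the identity with
`Δt` added at position `(3, 4)`, and `S⁻¹ ξ^∧ S = (F ξ)^∧`. Likewise `Υ ζ^∧ Υ⁻¹ = (Ad_Υ ζ)^∧` for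
`Υ ∈ SE₂(3)`. As `exp_m` commutes with conjugation, the noise-free factors `Γ, S⁻¹, T̄, S, Υ`
cancel and leave `Υ⁻¹ S⁻¹ exp_m(ξ^∧) S Υ = exp_m((Ad_{Υ⁻¹} F ξ)^∧)`. -/

namespace Matrix

variable {n : Type*} [Fintype n] [DecidableEq n]

theorem row_mul_of_row_eq_one_row {m α : Type*} [NonAssocSemiring α] {T : Matrix n n α} {i : n}
    (h : T i = (1 : Matrix n n α) i) (S : Matrix n m α) : (T * S) i = S i := by
  ext j
  rw [mul_apply', h]
  simp [dotProduct, one_apply]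

-- Only needed to reach the convergence of the exponential series; `NormedSpace.exp` itself
-- depends on the topology alone.
attribute [local instance] Matrix.linftyOpNormedRing Matrix.linftyOpNormedAlgebra

theorem exp_row_eq_one_row {A : Matrix n n ℝ} {i : n} (h : A i = 0) :
    NormedSpace.exp A i = (1 : Matrix n n ℝ) i := by
  have hpow : ∀ k ≠ 0, (A ^ k) i = 0 := by
    intro k hk
    obtain ⟨k, rfl⟩ := Nat.exists_eq_succ_of_ne_zero hk
    ext j
    simp [pow_succ', mul_apply, h]
  have hsum := Pi.hasSum.mp (NormedSpace.exp_series_hasSum_exp' (𝕂 := ℝ) A) i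
  have hconst : HasSum (fun k : ℕ => ((k.factorial : ℝ)⁻¹ • A ^ k : Matrix n n ℝ) i)
      ((1 : Matrix n n ℝ) i) := by
    convert hasSum_single (f := fun k : ℕ => ((k.factorial : ℝ)⁻¹ • A ^ k : Matrix n n ℝ) i) 0
      fun k hk => ?_
    · simp
    · change (k.factorial : ℝ)⁻¹ • (A ^ k) i = 0
      rw [hpow k hk, smul_zero]
  exact hsum.unique hconst

end Matrix

def HasUnitBottomRows (T : M5) : Prop := T 3 = (1 : M5) 3 ∧ T 4 = (1 : M5) 4

theorem HasUnitBottomRows.mul {T S : M5} (hT : HasUnitBottomRows T) (hS : HasUnitBottomRows S) :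
    HasUnitBottomRows (T * S) :=
  ⟨(Matrix.row_mul_of_row_eq_one_row hT.1 S).trans hS.1, (Matrix.row_mul_of_row_eq_one_row hT.2 S).trans hS.2⟩

theorem IsSE23.hasUnitBottomRows {T : M5} (hT : IsSE23 T) : HasUnitBottomRows T := by
  obtain ⟨R, V, X, -, rfl⟩ := hT
  constructor <;> ext j <;> fin_cases j <;> rfl

theorem hasUnitBottomRows_exp_hat9 (ξ : V9) : HasUnitBottomRows (NormedSpace.exp (hat9 ξ)) := by
  constructor <;> refine Matrix.exp_row_eq_one_row ?_ <;> ext j <;> fin_cases j <;> rfl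

def shear (t : ℝ) : M5 := !![1, 0, 0, 0, 0; 0, 1, 0, 0, 0; 0, 0, 1, 0, 0; 0, 0, 0, 1, t; 0, 0, 0, 0, 1]

theorem shear_mul_shear (s t : ℝ) : shear s * shear t = shear (s + t) := by
  ext i j
  fin_cases i <;> fin_cases j <;> simp [shear, Matrix.mul_apply, Fin.sum_univ_five, add_comm]

theorem shear_zero : shear 0 = 1 := by
  ext i j
  fin_cases i <;> fin_cases j <;> rfl

theorem shear_mul_shear_neg (t : ℝ) : shear t * shear (-t) = 1 := by
  rw [shear_mul_shear, add_neg_cancel, shear_zero]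

theorem inv_shear (t : ℝ) : (shear t)⁻¹ = shear (-t) :=
  Matrix.inv_eq_right_inv (shear_mul_shear_neg t)

theorem isUnit_shear (t : ℝ) : IsUnit (shear t) :=
  .of_mul_eq_one _ (shear_mul_shear_neg t)

theorem Phi_eq_shear_conj (t : ℝ) {T : M5} (hT : HasUnitBottomRows T) :
    Phi t T = shear (-t) * T * shear t := by
  obtain ⟨h3, h4⟩ := hT
  ext i j
  fin_cases i <;> fin_cases j <;>
    simp [Phi, shear, Matrix.mul_apply, Matrix.vecMul, dotProduct, Fin.sum_univ_five,
      congrFun h3, congrFun h4, Matrix.one_apply] <;> ring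

theorem shear_conj_hat9 (t : ℝ) (ξ : V9) : shear (-t) * hat9 ξ * shear t = hat9 (Fmap t ξ) := by
  ext i j
  fin_cases i <;> fin_cases j <;>
    simp [shear, hat9, hat, Fmap, blk, skew, Matrix.mul_apply, Fin.sum_univ_five] <;> ring

theorem skew_mulVec (a b : V3) : skew a *ᵥ b = crossProduct a b := by
  ext i
  fin_cases i <;> simp [skew, crossProduct, Matrix.mulVec, dotProduct, Fin.sum_univ_three] <;> ring

theorem transpose_mul_skew_mulVec_mul (A : M3) (v : V3) :
    Aᵀ * skew (A *ᵥ v) * A = A.det • skew v := by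
  ext i j
  fin_cases i <;> fin_cases j <;>
    simp [skew, Matrix.mul_apply, Matrix.mulVec, dotProduct, Fin.sum_univ_three,
      Matrix.det_fin_three] <;> ring

theorem IsSO3.mul_transpose {R : M3} (hR : IsSO3 R) : R * Rᵀ = 1 :=
  mul_eq_one_comm.mpr hR.1

theorem IsSO3.transpose {R : M3} (hR : IsSO3 R) : IsSO3 Rᵀ :=
  ⟨by rw [Matrix.transpose_transpose, hR.mul_transpose], by rw [Matrix.det_transpose, hR.2]⟩

theorem IsSO3.skew_mulVec {R : M3} (hR : IsSO3 R) (v : V3) :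
    skew (R *ᵥ v) = R * skew v * Rᵀ := by
  calc skew (R *ᵥ v) = R * (Rᵀ * skew (R *ᵥ v) * R) * Rᵀ := by
        simp only [← mul_assoc, hR.mul_transpose, one_mul]
        rw [mul_assoc, hR.mul_transpose, mul_one]
    _ = R * skew v * Rᵀ := by rw [transpose_mul_skew_mulVec_mul, hR.2, one_smul]

theorem se23_mul_se23 (R R' : M3) (V X V' X' : V3) :
    se23 R V X * se23 R' V' X' = se23 (R * R') (R *ᵥ V' + V) (R *ᵥ X' + X) := by
  ext i j
  fin_cases i <;> fin_cases j <;>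
    simp [se23, blk, Matrix.mul_apply, Matrix.mulVec, dotProduct,
      Fin.sum_univ_five, Fin.sum_univ_three]

theorem se23_one_zero_zero : se23 1 0 0 = 1 := by
  ext i j
  fin_cases i <;> fin_cases j <;> rfl

theorem se23_mul_se23_inverse {R : M3} (hR : IsSO3 R) (V X : V3) :
    se23 R V X * se23 Rᵀ (-(Rᵀ *ᵥ V)) (-(Rᵀ *ᵥ X)) = 1 := by
  simp only [se23_mul_se23, Matrix.mulVec_neg, Matrix.mulVec_mulVec, hR.mul_transpose,
    Matrix.one_mulVec, neg_add_cancel, se23_one_zero_zero]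

theorem IsSE23.isUnit {T : M5} (hT : IsSE23 T) : IsUnit T := by
  obtain ⟨R, V, X, hR, rfl⟩ := hT
  exact .of_mul_eq_one _ (se23_mul_se23_inverse hR V X)

theorem IsSE23.inv {T : M5} (hT : IsSE23 T) : IsSE23 T⁻¹ := by
  obtain ⟨R, V, X, hR, rfl⟩ := hT
  exact ⟨_, _, _, hR.transpose, Matrix.inv_eq_right_inv (se23_mul_se23_inverse hR V X)⟩

theorem Rof_se23 (R : M3) (V X : V3) : Rof (se23 R V X) = R := by
  ext i j; fin_cases i <;> fin_cases j <;> rfl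

theorem Vof_se23 (R : M3) (V X : V3) : Vof (se23 R V X) = V := by
  ext i; fin_cases i <;> rfl

theorem Xof_se23 (R : M3) (V X : V3) : Xof (se23 R V X) = X := by
  ext i; fin_cases i <;> rfl

theorem se23_mul_hat (R : M3) (V X ω v x : V3) :
    se23 R V X * hat ω v x = blk (R * skew ω) (R *ᵥ v) (R *ᵥ x) 0 0 := by
  ext i j
  fin_cases i <;> fin_cases j <;>
    simp [se23, hat, blk, skew, Matrix.mul_apply, Matrix.mulVec, dotProduct,
      Fin.sum_univ_five, Fin.sum_univ_three]

theorem hat_mul_se23 (R : M3) (V X ω v x : V3) :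
    hat ω v x * se23 R V X = blk (skew ω * R) (skew ω *ᵥ V + v) (skew ω *ᵥ X + x) 0 0 := by
  ext i j
  fin_cases i <;> fin_cases j <;>
    simp [se23, hat, blk, skew, Matrix.mul_apply, dotProduct,
      Fin.sum_univ_five, Fin.sum_univ_three]

theorem IsSE23.mul_hat9 {T : M5} (hT : IsSE23 T) (ζ : V9) :
    T * hat9 ζ = hat9 (Ad T ζ) * T := by
  obtain ⟨R, V, X, hR, rfl⟩ := hT
  simp only [hat9, Ad, Rof_se23, Vof_se23, Xof_se23, se23_mul_hat, hat_mul_se23,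
    ← Matrix.mulVec_mulVec, skew_mulVec]
  rw [hR.skew_mulVec, mul_assoc, hR.1, mul_one]
  -- the translation columns reduce to `(R ω) × V + V × (R ω) = 0`
  congr 1 <;> rw [← cross_anticomm] <;> abel

theorem IsSE23.exp_hat9_Ad {T : M5} (hT : IsSE23 T) (ζ : V9) :
    NormedSpace.exp (hat9 (Ad T ζ)) = T * NormedSpace.exp (hat9 ζ) * T⁻¹ := by
  have hdet : IsUnit T.det := (Matrix.isUnit_iff_isUnit_det T).mp hT.isUnit
  rw [← Matrix.exp_conj T _ hT.isUnit, hT.mul_hat9, mul_assoc, Matrix.mul_nonsing_inv T hdet,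
    mul_one]

theorem exp_hat9_Fmap (t : ℝ) (ξ : V9) :
    NormedSpace.exp (hat9 (Fmap t ξ)) = shear (-t) * NormedSpace.exp (hat9 ξ) * shear t := by
  have hinv : (shear (-t))⁻¹ = shear t := by rw [inv_shear, neg_neg]
  rw [← shear_conj_hat9, ← hinv, Matrix.exp_conj _ _ (isUnit_shear _)]

/-- one-step error accumulation with noise:
`Tbar_{k+1}⁻¹ T_{k+1} = exp_m((F_k ξ_k)^∧) exp_m(η_k^∧)` where `F_k = Ad_{Υ_k⁻¹} F`. -/
theorem stmt_14 (Δt : ℝ) (Tbar Υ : M5) (hT : IsSE23 Tbar) (hΥ : IsSE23 Υ)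
    (Γ : M5) (hΓ : IsUnit Γ) (ξ η : V9) :
    (Γ * Phi Δt Tbar * Υ)⁻¹
        * (Γ * Phi Δt (Tbar * NormedSpace.exp (hat9 ξ)) * Υ * NormedSpace.exp (hat9 η))
      = NormedSpace.exp (hat9 (Ad Υ⁻¹ (Fmap Δt ξ))) * NormedSpace.exp (hat9 η) := by
  have hΓdet := (Matrix.isUnit_iff_isUnit_det Γ).mp hΓ
  have hTdet := (Matrix.isUnit_iff_isUnit_det Tbar).mp hT.isUnit
  have hΥdet := (Matrix.isUnit_iff_isUnit_det Υ).mp hΥ.isUnit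
  rw [Phi_eq_shear_conj Δt hT.hasUnitBottomRows,
    Phi_eq_shear_conj Δt (hT.hasUnitBottomRows.mul (hasUnitBottomRows_exp_hat9 ξ)),
    hΥ.inv.exp_hat9_Ad, exp_hat9_Fmap, Matrix.nonsing_inv_nonsing_inv Υ hΥdet]
  simp only [Matrix.mul_inv_rev, inv_shear, neg_neg, mul_assoc]
  rw [Matrix.nonsing_inv_mul_cancel_left Γ _ hΓdet, ← mul_assoc (shear Δt),
    shear_mul_shear_neg, one_mul, Matrix.nonsing_inv_mul_cancel_left Tbar _ hTdet]
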